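/- Let ω ∈ {0,1,2}^ℕ be a non-constant sequence and let m(ω) = max{n ≥ 1 : ω_1 = ⋯ = ω_n}. Then the level stabilizer St_{G_ω}(m(ω)+2) is contained in the commutator subgroup G_ω' of the Grigorchuk group G_ω. -/

import Mathlib

namespace Grig

/-- Sequences ω ∈ {0,1,2}^ℕ (0-indexed: `ω n` is the paper's ω_{n+1}). -/
abbrev Seq := ℕ → Fin 3

/-- The shifted sequence σω. -/
def shift (ω : Seq) : Seq := fun n => ω (n + 1)

/-- The n-fold shifted sequence σⁿω. -/
def shiftn (n : ℕ) (ω : Seq) : Seq := fun m => ω (m + n)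

/-- The rooted automorphism `a`, as a map on words over {0,1} (encoded as `List Bool`). -/
def aMap : List Bool → List Bool
  | [] => []
  | x :: w => (!x) :: w

lemma aMap_invol : ∀ w, aMap (aMap w) = w := by
  intro w; cases w <;> simp [aMap]

/-- The rooted automorphism `a`. -/
def aPerm : Equiv.Perm (List Bool) := ⟨aMap, aMap, aMap_invol, aMap_invol⟩

/-- The directed automorphism with "trivial tag" `k` of the Grigorchuk group `G_ω`:
`k = 2` gives `b_ω`, `k = 1` gives `c_ω`, `k = 0` gives `d_ω`.  Its section at the
vertex 1 is the corresponding automorphism for σω, and its section at the vertex 0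
is `a` if ω₁ ≠ k and trivial if ω₁ = k. -/
def genMap (k : Fin 3) : Seq → List Bool → List Bool
  | _, [] => []
  | ω, false :: w => false :: (if ω 0 = k then w else aMap w)
  | ω, true :: w => true :: genMap k (shift ω) w

lemma genMap_invol (k : Fin 3) : ∀ (w : List Bool) (ω : Seq), genMap k ω (genMap k ω w) = w := by
  intro w
  induction w with
  | nil => intro ω; rfl
  | cons x w ih =>
      intro ω
      cases x with
      | false => by_cases h : ω 0 = k <;> simp [genMap, h, aMap_invol]
      | true => simp [genMap, ih]

def genPerm (k : Fin 3) (ω : Seq) : Equiv.Perm (List Bool) :=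
  ⟨genMap k ω, genMap k ω, fun w => genMap_invol k w ω, fun w => genMap_invol k w ω⟩

/-- The generator `b_ω`. -/
def b (ω : Seq) : Equiv.Perm (List Bool) := genPerm 2 ω
/-- The generator `c_ω`. -/
def c (ω : Seq) : Equiv.Perm (List Bool) := genPerm 1 ω
/-- The generator `d_ω`. -/
def d (ω : Seq) : Equiv.Perm (List Bool) := genPerm 0 ω

/-- The Grigorchuk group `G_ω = ⟨a, b_ω, c_ω, d_ω⟩`, as a subgroup of the group of
permutations of the vertices of the binary rooted tree.  (Every generator preserves
word length and prefixes, so `G_ω` consists of automorphisms of the tree.) -/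
def G (ω : Seq) : Subgroup (Equiv.Perm (List Bool)) :=
  Subgroup.closure {aPerm, b ω, c ω, d ω}

lemma aPerm_mem (ω : Seq) : aPerm ∈ G ω := Subgroup.subset_closure (by simp)
lemma b_mem (ω : Seq) : b ω ∈ G ω := Subgroup.subset_closure (by simp)
lemma c_mem (ω : Seq) : c ω ∈ G ω := Subgroup.subset_closure (by simp)
lemma d_mem (ω : Seq) : d ω ∈ G ω := Subgroup.subset_closure (by simp)

/-- `a` as an element of `G_ω`. -/
def aSub (ω : Seq) : ↥(G ω) := ⟨aPerm, aPerm_mem ω⟩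
/-- `b_ω` as an element of `G_ω`. -/
def bSub (ω : Seq) : ↥(G ω) := ⟨b ω, b_mem ω⟩
/-- `c_ω` as an element of `G_ω`. -/
def cSub (ω : Seq) : ↥(G ω) := ⟨c ω, c_mem ω⟩
/-- `d_ω` as an element of `G_ω`. -/
def dSub (ω : Seq) : ↥(G ω) := ⟨d ω, d_mem ω⟩

/-- The subgroup of permutations of the tree fixing every vertex of level `n`. -/
def levelStab (n : ℕ) : Subgroup (Equiv.Perm (List Bool)) where
  carrier := {f | ∀ w : List Bool, w.length = n → f w = w}
  one_mem' := by intro w _; rfl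
  mul_mem' := by
    intro f g hf hg w hw
    rw [Equiv.Perm.mul_apply, hg w hw, hf w hw]
  inv_mem' := by
    intro f hf w hw
    calc f⁻¹ w = f⁻¹ (f w) := by rw [hf w hw]
    _ = w := f.symm_apply_apply w

/-- The `n`-th level stabiliser `St_{G_ω}(n)` (as a subgroup of the ambient
permutation group). -/
def St (ω : Seq) (n : ℕ) : Subgroup (Equiv.Perm (List Bool)) := G ω ⊓ levelStab n

/-- The `n`-th level stabiliser `St_{G_ω}(n)` seen as a subgroup of `G_ω`. -/
def stab (ω : Seq) (n : ℕ) : Subgroup ↥(G ω) := (levelStab n).subgroupOf (G ω)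

lemma aMap_length (w : List Bool) : (aMap w).length = w.length := by
  cases w <;> simp [aMap]

lemma genMap_length (k : Fin 3) :
    ∀ (w : List Bool) (ω : Seq), (genMap k ω w).length = w.length := by
  intro w
  induction w with
  | nil => intro ω; rfl
  | cons x w ih =>
      intro ω
      cases x with
      | false => by_cases h : ω 0 = k <;> simp [genMap, h, aMap_length]
      | true => simp [genMap, ih]

/-- The subgroup of length-preserving permutations of the set of words. -/
def lenPres : Subgroup (Equiv.Perm (List Bool)) where
  carrier := {f | ∀ w : List Bool, (f w).length = w.length}
  one_mem' := by intro w; rfl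
  mul_mem' := by
    intro f g hf hg w
    rw [Equiv.Perm.mul_apply, hf, hg]
  inv_mem' := by
    intro f hf w
    conv_rhs => rw [← f.apply_symm_apply w]
    rw [hf]
    rfl

lemma G_le_lenPres (ω : Seq) : G ω ≤ lenPres := by
  rw [G]
  refine (Subgroup.closure_le _).2 ?_
  intro x hx
  simp only [Set.mem_insert_iff, Set.mem_singleton_iff] at hx
  rcases hx with rfl | rfl | rfl | rfl
  · exact fun w => aMap_length w
  · exact fun w => genMap_length 2 w ω
  · exact fun w => genMap_length 1 w ω
  · exact fun w => genMap_length 0 w ω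

instance stab_normal (ω : Seq) (n : ℕ) : (stab ω n).Normal := by
  constructor
  intro h hh g
  simp only [stab, Subgroup.mem_subgroupOf] at hh ⊢
  intro w hw
  have hginv : ((g : Equiv.Perm (List Bool))⁻¹ w).length = n := by
    rw [G_le_lenPres ω ((G ω).inv_mem g.2) w, hw]
  have : ((h : Equiv.Perm (List Bool))) ((g : Equiv.Perm (List Bool))⁻¹ w)
      = (g : Equiv.Perm (List Bool))⁻¹ w := hh _ hginv
  simp only [Subgroup.coe_mul, InvMemClass.coe_inv, Equiv.Perm.mul_apply]
  rw [this, Equiv.Perm.inv_def, Equiv.apply_symm_apply]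

/-- A (spherical) system of generators of a group. -/
def SphericalSystem {Q : Type*} [Group Q] {r : ℕ} (T : Fin r → Q) : Prop :=
  3 ≤ r ∧ (∀ i, T i ≠ 1) ∧ Subgroup.closure (Set.range T) = ⊤ ∧ (List.ofFn T).prod = 1

/-- The set Σ(T): the union of all conjugates of the cyclic subgroups generated by
the entries of `T`. -/
def SigmaSet {Q : Type*} [Group Q] {r : ℕ} (T : Fin r → Q) : Set Q :=
  ⋃ (g : Q) (i : Fin r), (fun x => g⁻¹ * x * g) '' (Subgroup.zpowers (T i) : Set Q)

/-- An (unmixed) ramification structure of size `(r₁, r₂)` for a group `Q`. -/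
def HasRamificationStructure (Q : Type*) [Group Q] (r₁ r₂ : ℕ) : Prop :=
  ∃ (T₁ : Fin r₁ → Q) (T₂ : Fin r₂ → Q),
    SphericalSystem T₁ ∧ SphericalSystem T₂ ∧ SigmaSet T₁ ∩ SigmaSet T₂ = {1}

/-- `i_k(ω) = min {n ≥ 1 : ω_n = k}` (meaningful when some entry of ω equals `k`;
with our 0-indexing this is `sInf {n | ω n = k} + 1`). -/
noncomputable def ikFin (k : Fin 3) (ω : Seq) : ℕ := sInf {n | ω n = k} + 1

/-- `m(ω) = max {n ≥ 1 : ω_1 = ⋯ = ω_n}` for a non-constant sequence ω;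
with our 0-indexing this is the least index where ω differs from ω 0. -/
noncomputable def mval (ω : Seq) : ℕ := sInf {n | ω n ≠ ω 0}


/-- The normal closure of the element `x` relative to the subgroup `H`:
the subgroup generated by all `H`-conjugates of `x`. -/
def nclIn (H : Subgroup (Equiv.Perm (List Bool))) (x : Equiv.Perm (List Bool)) :
    Subgroup (Equiv.Perm (List Bool)) :=
  Subgroup.closure {y | ∃ g ∈ H, y = g * x * g⁻¹}

/-- The `d`-generator of `G_ω`: `d_ω` if ω₁ = 0, `c_ω` if ω₁ = 1 and `b_ω` if ω₁ = 2;
with our encoding this is simply `genPerm (ω 0) ω`. -/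
def dGenPerm (ω : Seq) : Equiv.Perm (List Bool) := genPerm (ω 0) ω

/-- The subgroup of permutations fixing every word that does not have `u` as a prefix. -/
def awayStab (u : List Bool) : Subgroup (Equiv.Perm (List Bool)) where
  carrier := {f | ∀ w : List Bool, ¬ u <+: w → f w = w}
  one_mem' := by intro w _; rfl
  mul_mem' := by
    intro f g hf hg w hw
    rw [Equiv.Perm.mul_apply, hg w hw, hf w hw]
  inv_mem' := by
    intro f hf w hw
    calc f⁻¹ w = f⁻¹ (f w) := by rw [hf w hw]
    _ = w := f.symm_apply_apply w

/-- The rigid vertex stabiliser `Rist_{G_ω}(u)`. -/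
def Rist (ω : Seq) (u : List Bool) : Subgroup (Equiv.Perm (List Bool)) :=
  G ω ⊓ awayStab u

/-- The section map φ_u : for an automorphism `f` fixing the vertex `u`, the value
`sectionFun u f` is the section of `f` at `u` (as a map on words). -/
def sectionFun (u : List Bool) (f : Equiv.Perm (List Bool)) : List Bool → List Bool :=
  fun v => (f (u ++ v)).drop u.length

/-- The `d`-generator `x_ω` of `G_ω`, as an element of `G_ω`. -/
def xGen (ω : Seq) : ↥(G ω) :=
  if ω 0 = 0 then ⟨d ω, Subgroup.subset_closure (by simp)⟩
  else if ω 0 = 1 then ⟨c ω, Subgroup.subset_closure (by simp)⟩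
  else ⟨b ω, Subgroup.subset_closure (by simp)⟩

/-- The `c`-generator `y_ω` of `G_ω` (determined by ω_{m(ω)+1}), as an element of `G_ω`. -/
noncomputable def yGen (ω : Seq) : ↥(G ω) :=
  if ω (mval ω) = 0 then ⟨d ω, Subgroup.subset_closure (by simp)⟩
  else if ω (mval ω) = 1 then ⟨c ω, Subgroup.subset_closure (by simp)⟩
  else ⟨b ω, Subgroup.subset_closure (by simp)⟩

open scoped Classical in
/-- The bound `M` of the main theorem. -/
noncomputable def Mval (ω : Seq) : ℕ :=
  if ∀ k : Fin 3, ∃ n, shift ω n = k then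
    (Finset.univ.sup fun k : Fin 3 => ikFin k (shift ω)) + 4
  else if ∀ n, shift ω n = shift ω 0 then 4
  else ((Finset.univ.filter fun k : Fin 3 => ∃ n, shift ω n = k).sup
          fun k => ikFin k (shift ω)) + 4


end Grig

namespace Grig

open Equiv

/-! ### Auxiliary development -/

lemma fin3_cases (t : Fin 3) : t = 0 ∨ t = 1 ∨ t = 2 := by
  rcases t with ⟨(_ | _ | _ | n), ht⟩
  · exact Or.inl rfl
  · exact Or.inr (Or.inl rfl)
  · exact Or.inr (Or.inr rfl)
  · omega

lemma aPerm_lenPres : aPerm ∈ lenPres := fun w => aMap_length w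

lemma gen_lenPres (k : Fin 3) (ω : Seq) : genPerm k ω ∈ lenPres :=
  fun w => genMap_length k w ω

abbrev V (n : ℕ) := List.Vector Bool n

/-- Restriction of a length-preserving permutation to level `n`. -/
def restr (n : ℕ) : ↥lenPres →* Equiv.Perm (V n) where
  toFun f :=
    { toFun := fun v => ⟨(f : Equiv.Perm (List Bool)) v.1, (f.2 v.1).trans v.2⟩
      invFun := fun v => ⟨(f : Equiv.Perm (List Bool))⁻¹ v.1, ((f⁻¹).2 v.1).trans v.2⟩
      left_inv := fun v => Subtype.ext (by simp)
      right_inv := fun v => Subtype.ext (by simp) }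
  map_one' := Equiv.ext fun v => rfl
  map_mul' f g := Equiv.ext fun v => rfl

lemma restr_apply (n : ℕ) (f : ↥lenPres) (v : V n) :
    restr n f v = ⟨(f : Equiv.Perm (List Bool)) v.1, (f.2 v.1).trans v.2⟩ := rfl

/-- The cons equivalence `Bool × V n ≃ V (n+1)`. -/
def consE (n : ℕ) : Bool × V n ≃ V (n + 1) where
  toFun p := ⟨p.1 :: p.2.1, by simp [p.2.2]⟩
  invFun v := (v.1.headI, ⟨v.1.tail, by simp [v.2]⟩)
  left_inv p := by
    rcases p with ⟨x, ⟨l, hl⟩⟩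
    simp
  right_inv v := by
    rcases v with ⟨l, hl⟩
    cases l with
    | nil => simp at hl
    | cons x t => rfl

/-- The permutation of `Bool` swapping the two elements. -/
def boolNot : Equiv.Perm Bool := ⟨Bool.not, Bool.not, fun b => by simp, fun b => by simp⟩

lemma boolNot_eq_swap : boolNot = Equiv.swap false true := by
  apply Equiv.ext
  intro b
  cases b <;> simp [boolNot, Equiv.swap_apply_of_ne_of_ne]

/-- The sign of a permutation acting with sections. -/
lemma sign_restr_succ (n : ℕ) (f g h : ↥lenPres)
    (h0 : ∀ w, (f : Equiv.Perm (List Bool)) (false :: w) = false :: (g : Equiv.Perm (List Bool)) w)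
    (h1 : ∀ w, (f : Equiv.Perm (List Bool)) (true :: w) = true :: (h : Equiv.Perm (List Bool)) w) :
    Equiv.Perm.sign (restr (n + 1) f)
      = Equiv.Perm.sign (restr n g) * Equiv.Perm.sign (restr n h) := by
  have key : restr (n + 1) f
      = (consE n).permCongr (Equiv.prodCongrRight (fun x => if x then restr n h else restr n g)) := by
    apply Equiv.ext
    rintro ⟨l, hl⟩
    cases l with
    | nil => simp at hl
    | cons x t =>
      apply Subtype.ext
      cases x with
      | false =>
        exact h0 t
      | true =>
        exact h1 t
  rw [key, Equiv.Perm.sign_permCongr, Equiv.Perm.sign_prodCongrRight, Fintype.prod_bool]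
  simp [mul_comm]

/-- The sign of `a` at level `n+1`. -/
lemma sign_restr_aPerm (n : ℕ) :
    Equiv.Perm.sign (restr (n + 1) ⟨aPerm, aPerm_lenPres⟩) = (-1) ^ (2 ^ n) := by
  have key : restr (n + 1) ⟨aPerm, aPerm_lenPres⟩
      = (consE n).permCongr (Equiv.prodCongrLeft (fun _ : V n => boolNot)) := by
    apply Equiv.ext
    rintro ⟨l, hl⟩
    cases l with
    | nil => simp at hl
    | cons x t =>
      apply Subtype.ext
      rfl
  rw [key, Equiv.Perm.sign_permCongr, Equiv.Perm.sign_prodCongrLeft]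
  rw [boolNot_eq_swap]
  simp [Equiv.Perm.sign_swap, Finset.prod_const, card_vector]

lemma sign_restr_one_aPerm :
    Equiv.Perm.sign (restr 1 ⟨aPerm, aPerm_lenPres⟩) = -1 := by
  simpa using sign_restr_aPerm 0

lemma sign_restr_two_aPerm (n : ℕ) :
    Equiv.Perm.sign (restr (n + 2) ⟨aPerm, aPerm_lenPres⟩) = 1 := by
  rw [show n + 2 = (n + 1) + 1 by ring, sign_restr_aPerm (n + 1)]
  exact Even.neg_one_pow (by simp [pow_succ])

lemma restr_one_gen (k : Fin 3) (ω : Seq) :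
    restr 1 ⟨genPerm k ω, gen_lenPres k ω⟩ = 1 := by
  apply Equiv.ext
  rintro ⟨l, hl⟩
  apply Subtype.ext
  cases l with
  | nil => simp at hl
  | cons x t =>
    cases t with
    | cons y s => simp at hl
    | nil =>
      cases x <;> by_cases hk : ω 0 = k <;>
        (change genMap k ω _ = _; simp [genMap, aMap, hk]; rfl)

lemma sign_restr_gen (k : Fin 3) : ∀ (n : ℕ) (ω : Seq),
    Equiv.Perm.sign (restr (n + 2) ⟨genPerm k ω, gen_lenPres k ω⟩)
      = if ω n = k then 1 else -1 := by
  intro n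
  induction n with
  | zero =>
    intro ω
    by_cases hk : ω 0 = k
    · have := sign_restr_succ 1 ⟨genPerm k ω, gen_lenPres k ω⟩ 1
        ⟨genPerm k (shift ω), gen_lenPres k (shift ω)⟩
        (fun w => by simp [genPerm, genMap, hk]) (fun w => by simp [genPerm, genMap])
      rw [this, restr_one_gen]
      simp [hk]
    · have := sign_restr_succ 1 ⟨genPerm k ω, gen_lenPres k ω⟩ ⟨aPerm, aPerm_lenPres⟩
        ⟨genPerm k (shift ω), gen_lenPres k (shift ω)⟩
        (fun w => by simp [genPerm, genMap, hk, aPerm]) (fun w => by simp [genPerm, genMap])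
      rw [this, restr_one_gen, sign_restr_one_aPerm]
      simp [hk]
  | succ n ih =>
    intro ω
    by_cases hk : ω 0 = k
    · have := sign_restr_succ (n + 2) ⟨genPerm k ω, gen_lenPres k ω⟩ 1
        ⟨genPerm k (shift ω), gen_lenPres k (shift ω)⟩
        (fun w => by simp [genPerm, genMap, hk]) (fun w => by simp [genPerm, genMap])
      rw [this, ih (shift ω)]
      simp [shift]
      congr
    · have := sign_restr_succ (n + 2) ⟨genPerm k ω, gen_lenPres k ω⟩ ⟨aPerm, aPerm_lenPres⟩
        ⟨genPerm k (shift ω), gen_lenPres k (shift ω)⟩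
        (fun w => by simp [genPerm, genMap, hk, aPerm]) (fun w => by simp [genPerm, genMap])
      rw [this, ih (shift ω), sign_restr_two_aPerm]
      simp [shift]
      congr

/-! ### Prefix monotonicity -/

lemma aMap_prefix : ∀ {u v : List Bool}, u <+: v → aMap u <+: aMap v := by
  intro u v huv
  cases u with
  | nil => simp [aMap]
  | cons x u' =>
    cases v with
    | nil => simp at huv
    | cons y v' =>
      rw [List.cons_prefix_cons] at huv
      obtain ⟨rfl, h⟩ := huv
      simpa [aMap, List.cons_prefix_cons] using h

lemma genMap_prefix (k : Fin 3) : ∀ (u v : List Bool) (ω : Seq),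
    u <+: v → genMap k ω u <+: genMap k ω v := by
  intro u
  induction u with
  | nil => intro v ω _; simp [genMap]
  | cons x u' ih =>
    intro v ω huv
    cases v with
    | nil => simp at huv
    | cons y v' =>
      rw [List.cons_prefix_cons] at huv
      obtain ⟨rfl, h⟩ := huv
      cases x with
      | false =>
        by_cases hk : ω 0 = k
        · simpa [genMap, hk, List.cons_prefix_cons] using h
        · simpa [genMap, hk, List.cons_prefix_cons] using aMap_prefix h
      | true =>
        simpa [genMap, List.cons_prefix_cons] using ih v' (shift ω) h

/-- The subgroup of length-preserving, prefix-monotone permutations. -/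
def prefMono : Subgroup (Equiv.Perm (List Bool)) where
  carrier := {f | (∀ w, (f w).length = w.length) ∧ ∀ u v, u <+: v → f u <+: f v}
  one_mem' := ⟨fun _ => rfl, fun _ _ h => h⟩
  mul_mem' := by
    rintro f g ⟨hf1, hf2⟩ ⟨hg1, hg2⟩
    refine ⟨fun w => ?_, fun u v h => ?_⟩
    · rw [Equiv.Perm.mul_apply, hf1, hg1]
    · rw [Equiv.Perm.mul_apply, Equiv.Perm.mul_apply]
      exact hf2 _ _ (hg2 _ _ h)
  inv_mem' := by
    rintro f ⟨hf1, hf2⟩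
    have hlen : ∀ w, (f⁻¹ w).length = w.length := by
      intro w
      conv_rhs => rw [← f.apply_symm_apply w]
      rw [hf1]
      rfl
    refine ⟨hlen, fun u v huv => ?_⟩
    have hpv : (f⁻¹ v).take u.length <+: f⁻¹ v := List.take_prefix _ _
    have h2 : f ((f⁻¹ v).take u.length) <+: v := by
      have := hf2 _ _ hpv
      rwa [Equiv.Perm.inv_def, Equiv.apply_symm_apply] at this
    have hplen : ((f⁻¹ v).take u.length).length = u.length := by
      rw [List.length_take, hlen]
      exact min_eq_left huv.length_le
    have hfp : f ((f⁻¹ v).take u.length) = u := by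
      have e1 := List.prefix_iff_eq_take.mp h2
      have e2 := List.prefix_iff_eq_take.mp huv
      rw [e1, hf1, hplen, ← e2]
    have hp : f⁻¹ u = (f⁻¹ v).take u.length := by
      calc f⁻¹ u = f⁻¹ (f ((f⁻¹ v).take u.length)) := by rw [hfp]
        _ = (f⁻¹ v).take u.length := f.symm_apply_apply _
    rw [hp]
    exact hpv

lemma G_le_prefMono (ω : Seq) : G ω ≤ prefMono := by
  rw [G]
  refine (Subgroup.closure_le _).2 ?_
  intro x hx
  simp only [Set.mem_insert_iff, Set.mem_singleton_iff] at hx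
  rcases hx with rfl | rfl | rfl | rfl
  · exact ⟨fun w => aMap_length w, fun u v h => aMap_prefix h⟩
  · exact ⟨fun w => genMap_length 2 w ω, fun u v h => genMap_prefix 2 u v ω h⟩
  · exact ⟨fun w => genMap_length 1 w ω, fun u v h => genMap_prefix 1 u v ω h⟩
  · exact ⟨fun w => genMap_length 0 w ω, fun u v h => genMap_prefix 0 u v ω h⟩

/-- Level stabilisers in `G ω` are antitone. -/
lemma levelStab_anti (ω : Seq) {f : Equiv.Perm (List Bool)} (hf : f ∈ G ω) {n k : ℕ}
    (hkn : k ≤ n) (h : f ∈ levelStab n) : f ∈ levelStab k := by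
  intro w hw
  have hpm := G_le_prefMono ω hf
  set w' := w ++ List.replicate (n - k) false with hw'def
  have hw' : w'.length = n := by simp [hw'def, hw]; omega
  have h1 : f w <+: f w' := hpm.2 w w' ⟨List.replicate (n - k) false, rfl⟩
  rw [h w' hw'] at h1
  have h2 := List.prefix_iff_eq_take.mp h1
  rw [hpm.1 w, hw] at h2
  rw [h2, hw'def, ← hw, List.take_left]

/-! ### The relation `b c d = 1` -/

lemma bcd_apply : ∀ (w : List Bool) (ω : Seq),
    genMap 2 ω (genMap 1 ω (genMap 0 ω w)) = w := by
  intro w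
  induction w with
  | nil => intro ω; rfl
  | cons x w ih =>
    intro ω
    cases x with
    | true => simp [genMap, ih]
    | false =>
      rcases fin3_cases (ω 0) with h | h | h <;>
        simp [genMap, h, aMap_invol]

lemma bcd (ω : Seq) : b ω * c ω * d ω = 1 := by
  apply Equiv.ext
  intro w
  simp only [Equiv.Perm.mul_apply, Equiv.Perm.one_apply]
  exact bcd_apply w ω

lemma bcdSub (ω : Seq) : bSub ω * cSub ω * dSub ω = 1 :=
  Subtype.ext (bcd ω)

lemma aSub_sq (ω : Seq) : aSub ω * aSub ω = 1 :=
  Subtype.ext (Equiv.ext fun w => aMap_invol w)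

lemma genSub_sq (ω : Seq) (x : ↥(G ω)) (k : Fin 3) (hx : (x : Equiv.Perm (List Bool)) = genPerm k ω) :
    x * x = 1 := by
  apply Subtype.ext
  simp only [Subgroup.coe_mul, hx, OneMemClass.coe_one]
  exact Equiv.ext fun w => genMap_invol k w ω

/-! ### Normal form modulo the commutator subgroup -/

lemma normal_form (ω : Seq) (x : Equiv.Perm (List Bool)) (hx : x ∈ G ω) :
    ∃ i j k : ℤ, Abelianization.of (⟨x, hx⟩ : ↥(G ω)) =
      (Abelianization.of (aSub ω)) ^ i * (Abelianization.of (bSub ω)) ^ j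
        * (Abelianization.of (cSub ω)) ^ k := by
  induction hx using Subgroup.closure_induction with
  | mem y hy =>
    simp only [Set.mem_insert_iff, Set.mem_singleton_iff] at hy
    rcases hy with rfl | rfl | rfl | rfl
    · exact ⟨1, 0, 0, by simp [aSub]⟩
    · exact ⟨0, 1, 0, by simp [bSub]⟩
    · exact ⟨0, 0, 1, by simp [cSub]⟩
    · refine ⟨0, -1, -1, ?_⟩
      have h1 : (bSub ω * cSub ω)⁻¹ = dSub ω := inv_eq_of_mul_eq_one_right (bcdSub ω)
      rw [show (Abelianization.of (⟨d ω, _⟩ : ↥(G ω))) = Abelianization.of (dSub ω) from rfl, ← h1]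
      simp [mul_comm, mul_left_comm]
  | one =>
    refine ⟨0, 0, 0, ?_⟩
    have h1 : (⟨(1 : Equiv.Perm (List Bool)), _⟩ : ↥(G ω)) = 1 := rfl
    rw [h1]
    simp
  | mul y z hy hz ihy ihz =>
    obtain ⟨i1, j1, k1, h1⟩ := ihy
    obtain ⟨i2, j2, k2, h2⟩ := ihz
    refine ⟨i1 + i2, j1 + j2, k1 + k2, ?_⟩
    have hyz : (⟨y * z, _⟩ : ↥(G ω)) = (⟨y, hy⟩ : ↥(G ω)) * ⟨z, hz⟩ := rfl
    rw [hyz, map_mul, h1, h2, zpow_add, zpow_add, zpow_add]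
    simp [mul_comm, mul_left_comm, mul_assoc]
  | inv y hy ihy =>
    obtain ⟨i, j, k, h1⟩ := ihy
    refine ⟨-i, -j, -k, ?_⟩
    have hyi : (⟨y⁻¹, _⟩ : ↥(G ω)) = (⟨y, hy⟩ : ↥(G ω))⁻¹ := rfl
    rw [hyi, map_inv, h1]
    simp [zpow_neg, mul_comm, mul_left_comm]

/-! ### Arithmetic over `ℤˣ` -/

lemma neg_one_zpow_eq_one_iff (i : ℤ) : ((-1 : ℤˣ) ^ i = 1) ↔ Even i := by
  have h2 : ((-1 : ℤˣ) ^ (2 : ℤ)) = 1 := by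
    rw [show (2 : ℤ) = ((2 : ℕ) : ℤ) from rfl, zpow_natCast]
    decide
  constructor
  · intro h
    by_contra ho
    rw [Int.not_even_iff_odd] at ho
    obtain ⟨m, rfl⟩ := ho
    rw [zpow_add, zpow_mul, h2, one_zpow, one_mul, zpow_one] at h
    exact absurd h (by decide)
  · rintro ⟨m, rfl⟩
    rw [show m + m = 2 * m by ring, zpow_mul, h2, one_zpow]

lemma zpow_eq_one_of_even {M : Type*} [Group M] {a : M} (ha : a * a = 1) {i : ℤ}
    (hi : Even i) : a ^ i = 1 := by
  obtain ⟨m, rfl⟩ := hi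
  rw [show m + m = 2 * m by ring, zpow_mul]
  have h2 : a ^ (2 : ℤ) = 1 := by
    rw [show (2 : ℤ) = ((2 : ℕ) : ℤ) from rfl, zpow_natCast, pow_two, ha]
  rw [h2, one_zpow]

lemma evens_aux (t : Fin 3) (j k : ℤ)
    (h : ((if t = 2 then 1 else -1 : ℤˣ)) ^ j * ((if t = 1 then 1 else -1 : ℤˣ)) ^ k = 1) :
    (t = 0 → Even (j + k)) ∧ (t = 1 → Even j) ∧ (t = 2 → Even k) := by
  refine ⟨fun ht => ?_, fun ht => ?_, fun ht => ?_⟩ <;> subst ht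
  · rw [if_neg (by decide), if_neg (by decide), ← zpow_add] at h
    exact (neg_one_zpow_eq_one_iff _).mp h
  · rw [if_neg (by decide), if_pos rfl, one_zpow, mul_one] at h
    exact (neg_one_zpow_eq_one_iff _).mp h
  · rw [if_pos rfl, if_neg (by decide), one_zpow, one_mul] at h
    exact (neg_one_zpow_eq_one_iff _).mp h

lemma evens (t0 tm : Fin 3) (hne : tm ≠ t0) (j k : ℤ)
    (h2 : ((if t0 = 2 then 1 else -1 : ℤˣ)) ^ j * ((if t0 = 1 then 1 else -1 : ℤˣ)) ^ k = 1)
    (hm : ((if tm = 2 then 1 else -1 : ℤˣ)) ^ j * ((if tm = 1 then 1 else -1 : ℤˣ)) ^ k = 1) :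
    Even j ∧ Even k := by
  have e2 := evens_aux t0 j k h2
  have em := evens_aux tm j k hm
  rcases fin3_cases t0 with h0 | h0 | h0 <;> rcases fin3_cases tm with h1 | h1 | h1 <;>
    subst h0 <;> subst h1
  · exact absurd rfl hne
  · have ejk := e2.1 rfl
    have ej := em.2.1 rfl
    exact ⟨ej, (Int.even_add.mp ejk).mp ej⟩
  · have ejk := e2.1 rfl
    have ek := em.2.2 rfl
    exact ⟨(Int.even_add.mp ejk).mpr ek, ek⟩
  · have ej := e2.2.1 rfl
    have ejk := em.1 rfl
    exact ⟨ej, (Int.even_add.mp ejk).mp ej⟩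
  · exact absurd rfl hne
  · exact ⟨e2.2.1 rfl, em.2.2 rfl⟩
  · have ek := e2.2.2 rfl
    have ejk := em.1 rfl
    exact ⟨(Int.even_add.mp ejk).mpr ek, ek⟩
  · exact ⟨em.2.1 rfl, e2.2.2 rfl⟩
  · exact absurd rfl hne

end Grig

namespace Grig

/-- For non-constant ω, the level stabiliser `St_{G_ω}(m(ω)+2)` is
contained in the commutator subgroup `G_ω'` of `G_ω`. -/
theorem levelStab_le_commutator (ω : Seq) (hnc : ¬ ∀ m, ω m = ω 0) :
    St ω (mval ω + 2) ≤ Subgroup.map (G ω).subtype (commutator ↥(G ω)) := by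
  intro x hx
  rw [St, Subgroup.mem_inf] at hx
  obtain ⟨hxG, hxS⟩ := hx
  have hne : {n | ω n ≠ ω 0}.Nonempty := by
    push_neg at hnc
    obtain ⟨m, hm⟩ := hnc
    exact ⟨m, hm⟩
  have hmval : ω (mval ω) ≠ ω 0 := Nat.sInf_mem hne
  obtain ⟨i, j, k, hq⟩ := normal_form ω x hxG
  set g0 : ↥(G ω) := ⟨x, hxG⟩ with hg0def
  set ι : ↥(G ω) →* ↥lenPres := Subgroup.inclusion (G_le_lenPres ω) with hιdef
  have ιa : ι (aSub ω) = ⟨aPerm, aPerm_lenPres⟩ := Subtype.ext rfl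
  have ιb : ι (bSub ω) = ⟨genPerm 2 ω, gen_lenPres 2 ω⟩ := Subtype.ext rfl
  have ιc : ι (cSub ω) = ⟨genPerm 1 ω, gen_lenPres 1 ω⟩ := Subtype.ext rfl
  have key : ∀ ℓ : ℕ, x ∈ levelStab ℓ →
      (Equiv.Perm.sign ((restr ℓ) (ι (aSub ω)))) ^ i
        * (Equiv.Perm.sign ((restr ℓ) (ι (bSub ω)))) ^ j
        * (Equiv.Perm.sign ((restr ℓ) (ι (cSub ω)))) ^ k = 1 := by
    intro ℓ hℓ
    set χ : ↥(G ω) →* ℤˣ := (Equiv.Perm.sign.comp (restr ℓ)).comp ι with hχdef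
    have hχg : χ g0 = 1 := by
      have hr : restr ℓ (ι g0) = 1 := by
        apply Equiv.ext
        rintro ⟨l, hl⟩
        exact Subtype.ext (hℓ l hl)
      simp only [hχdef, MonoidHom.comp_apply, hr, map_one]
    have h1 : χ g0 = (Abelianization.lift χ) (Abelianization.of g0) := rfl
    rw [hq] at h1
    rw [map_mul, map_mul, map_zpow, map_zpow, map_zpow] at h1
    simp only [Abelianization.lift_apply_of] at h1
    rw [hχg] at h1
    exact h1.symm
  have stab1 : x ∈ levelStab 1 := levelStab_anti ω hxG (by omega) hxS
  have stab2 : x ∈ levelStab 2 := levelStab_anti ω hxG (by omega) hxS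
  have E1 := key 1 stab1
  have E2 := key 2 stab2
  have Em := key (mval ω + 2) hxS
  rw [ιa, ιb, ιc] at E1 E2 Em
  rw [sign_restr_one_aPerm, restr_one_gen, restr_one_gen] at E1
  have hi : Even i := by
    rw [map_one, one_zpow, one_zpow, mul_one, mul_one] at E1
    exact (neg_one_zpow_eq_one_iff i).mp E1
  have hE2 : ((if ω 0 = 2 then 1 else -1 : ℤˣ)) ^ j
      * ((if ω 0 = 1 then 1 else -1 : ℤˣ)) ^ k = 1 := by
    have ha2 := sign_restr_two_aPerm 0
    have hb2 := sign_restr_gen 2 0 ω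
    have hc2 := sign_restr_gen 1 0 ω
    rw [show (0 : ℕ) + 2 = 2 by rfl] at ha2 hb2 hc2
    rw [ha2, hb2, hc2, one_zpow, one_mul] at E2
    exact E2
  have hEm : ((if ω (mval ω) = 2 then 1 else -1 : ℤˣ)) ^ j
      * ((if ω (mval ω) = 1 then 1 else -1 : ℤˣ)) ^ k = 1 := by
    rw [sign_restr_two_aPerm (mval ω), sign_restr_gen 2 (mval ω) ω,
      sign_restr_gen 1 (mval ω) ω, one_zpow, one_mul] at Em
    exact Em
  obtain ⟨hj, hk⟩ := evens (ω 0) (ω (mval ω)) hmval j k hE2 hEm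
  have hQ : Abelianization.of g0 = 1 := by
    have ha : Abelianization.of (aSub ω) * Abelianization.of (aSub ω) = 1 := by
      rw [← map_mul, aSub_sq ω, map_one]
    have hb : Abelianization.of (bSub ω) * Abelianization.of (bSub ω) = 1 := by
      rw [← map_mul, genSub_sq ω (bSub ω) 2 rfl, map_one]
    have hc : Abelianization.of (cSub ω) * Abelianization.of (cSub ω) = 1 := by
      rw [← map_mul, genSub_sq ω (cSub ω) 1 rfl, map_one]
    rw [hq, zpow_eq_one_of_even ha hi, zpow_eq_one_of_even hb hj,
      zpow_eq_one_of_even hc hk]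
    simp
  have hcomm : g0 ∈ commutator ↥(G ω) := (QuotientGroup.eq_one_iff g0).mp hQ
  rw [Subgroup.mem_map]
  exact ⟨g0, hcomm, rfl⟩

end Grig
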